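/- arXiv:2102.04509 — 2 statements merged into one kernel-verified Lean document; each statement's English description precedes it below -/
import Mathlib

section
/- With the setup of the previous statement, let Q(x',x) = min{ exp(Δ(x',x)/2)/Z(x), exp(Δ(x',x)/2)/Z(x') } and Q^∇(x',x) = min{ exp(∇(x',x)/2)/Z̃(x), exp(Δ(x',x) + ∇(x,x')/2)/Z̃(x') }. Then for all x' ≠ x with x' ∈ H(x), Q^∇(x',x) ≥ exp(-L·D_H²/2)·Q(x',x). -/
/-!
With `c = L D_H² / 2`, the descent lemma for `L`-smooth `f` gives `|Δ(x',x) - ∇(x',x)| ≤ c`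
for all neighbours. Hence every summand of `Z̃(x)` is at most `exp(c/2)` times the corresponding
summand of `Z(x)`, while each numerator of `Q^∇` is at least `exp(-c/2)` times the numerator of `Q`
(for the second one through the antisymmetry `Δ(x,x') = -Δ(x',x)`). The two losses multiply to
`exp(-c)`.
-/

open Real Set

theorem norm_sub_sub_fderiv_le_of_lipschitzWith_fderiv {E F : Type*}
    [NormedAddCommGroup E] [NormedSpace ℝ E] [NormedAddCommGroup F] [NormedSpace ℝ F]
    {f : E → F} {L : NNReal} (hf : Differentiable ℝ f) (hL : LipschitzWith L (fderiv ℝ f))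
    (x y : E) : ‖f y - f x - fderiv ℝ f x (y - x)‖ ≤ L / 2 * ‖y - x‖ ^ 2 := by
  set v := y - x
  let φ : ℝ → F := fun t => f (x + t • v) - f x - t • fderiv ℝ f x v
  have hφ : ∀ t, HasDerivAt φ (fderiv ℝ f (x + t • v) v - fderiv ℝ f x v) t := by
    intro t
    have hline : HasDerivAt (fun t : ℝ => x + t • v) v t := by
      simpa using ((hasDerivAt_id t).smul_const v).const_add x
    exact (((hf _).hasFDerivAt.comp_hasDerivAt t hline).sub_const (f x)).sub
      ((hasDerivAt_id t).smul_const _ |>.congr_deriv (one_smul ℝ _))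
  have hbound : ∀ t ∈ Ico (0 : ℝ) 1,
      ‖fderiv ℝ f (x + t • v) v - fderiv ℝ f x v‖ ≤ L * ‖v‖ ^ 2 * t := by
    rintro t ⟨ht, -⟩
    calc ‖fderiv ℝ f (x + t • v) v - fderiv ℝ f x v‖
        = ‖(fderiv ℝ f (x + t • v) - fderiv ℝ f x) v‖ := rfl
      _ ≤ ‖fderiv ℝ f (x + t • v) - fderiv ℝ f x‖ * ‖v‖ := ContinuousLinearMap.le_opNorm _ _
      _ ≤ L * ‖t • v‖ * ‖v‖ := by
          gcongr
          simpa [dist_eq_norm] using hL.dist_le_mul (x + t • v) x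
      _ = L * ‖v‖ ^ 2 * t := by rw [norm_smul, norm_of_nonneg ht]; ring
  have hB : ∀ t, HasDerivAt (fun t : ℝ => L / 2 * ‖v‖ ^ 2 * t ^ 2) (L * ‖v‖ ^ 2 * t) t :=
    fun t => ((hasDerivAt_pow 2 t).const_mul _).congr_deriv (by push_cast; ring)
  have hfence := image_norm_le_of_norm_deriv_right_le_deriv_boundary
    (fun t _ => (hφ t).continuousAt.continuousWithinAt) (fun t _ => (hφ t).hasDerivWithinAt)
    (by simp [φ]) hB hbound (right_mem_Icc.2 zero_le_one)
  simpa [φ, v] using hfence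

theorem abs_sub_sub_inner_gradient_le_of_lipschitzWith_gradient {E : Type*}
    [NormedAddCommGroup E] [InnerProductSpace ℝ E] [CompleteSpace E]
    {f : E → ℝ} {L : NNReal} (hf : Differentiable ℝ f) (hL : LipschitzWith L (gradient f))
    (x y : E) : |f y - f x - inner ℝ (gradient f x) (y - x)| ≤ L / 2 * ‖y - x‖ ^ 2 := by
  have hL' : LipschitzWith L (fderiv ℝ f) := by
    simpa [← toDual_comp_gradient] using (InnerProductSpace.toDual ℝ E).lipschitz.comp hL
  simpa [inner_gradient_left] using norm_sub_sub_fderiv_le_of_lipschitzWith_fderiv hf hL' x y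

theorem sum_exp_le_exp_mul_sum_exp {ι : Type*} {s : Finset ι} {u v : ι → ℝ} {d : ℝ}
    (h : ∀ i ∈ s, v i ≤ u i + d) : ∑ i ∈ s, exp (v i) ≤ exp d * ∑ i ∈ s, exp (u i) := by
  rw [Finset.mul_sum]
  refine Finset.sum_le_sum fun i hi => ?_
  rw [← exp_add]
  exact exp_le_exp.2 (by linarith [h i hi])

theorem exp_neg_mul_exp_div_sum_exp_le {ι : Type*} {s : Finset ι} {u v : ι → ℝ} {a b c : ℝ}
    (huv : ∀ i ∈ s, v i ≤ u i + c / 2) (hab : a ≤ b + c / 2) :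
    exp (-c) * (exp a / ∑ i ∈ s, exp (u i)) ≤ exp b / ∑ i ∈ s, exp (v i) := by
  rcases s.eq_empty_or_nonempty with rfl | hs
  · simp
  have hZ : 0 < ∑ i ∈ s, exp (u i) := Finset.sum_pos (fun i _ => exp_pos _) hs
  have hZ' : 0 < ∑ i ∈ s, exp (v i) := Finset.sum_pos (fun i _ => exp_pos _) hs
  rw [mul_div_assoc', div_le_div_iff₀ hZ hZ']
  calc exp (-c) * exp a * ∑ i ∈ s, exp (v i)
      ≤ exp (-c) * exp a * (exp (c / 2) * ∑ i ∈ s, exp (u i)) := by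
        gcongr; exact sum_exp_le_exp_mul_sum_exp huv
    _ = exp (a - c / 2) * ∑ i ∈ s, exp (u i) := by
        rw [show a - c / 2 = -c + a + c / 2 by ring, exp_add, exp_add]
        ring
    _ ≤ exp b * ∑ i ∈ s, exp (u i) := by gcongr; linarith

theorem kernel_domination_general {D : ℕ}
    (f : EuclideanSpace ℝ (Fin D) → ℝ) (L : NNReal)
    (hf : Differentiable ℝ f)
    (hL : LipschitzWith L (gradient f))
    (H : EuclideanSpace ℝ (Fin D) → Finset (EuclideanSpace ℝ (Fin D)))
    (DH : ℝ) (hDH : ∀ x, ∀ x' ∈ H x, ‖x' - x‖ ≤ DH)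
    (Δ : EuclideanSpace ℝ (Fin D) → EuclideanSpace ℝ (Fin D) → ℝ)
    (hΔ : ∀ x' x, Δ x' x = f x' - f x)
    (g : EuclideanSpace ℝ (Fin D) → EuclideanSpace ℝ (Fin D) → ℝ)
    (hg : ∀ x' x, g x' x = (inner ℝ (gradient f x) (x' - x) : ℝ))
    (Z Ztil : EuclideanSpace ℝ (Fin D) → ℝ)
    (hZ : ∀ x, Z x = ∑ y ∈ H x, Real.exp (Δ y x / 2))
    (hZtil : ∀ x, Ztil x = ∑ y ∈ H x, Real.exp (g y x / 2))
    (Q Qgrad : EuclideanSpace ℝ (Fin D) → EuclideanSpace ℝ (Fin D) → ℝ)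
    (hQ : ∀ x' x, Q x' x = min (Real.exp (Δ x' x / 2) / Z x) (Real.exp (Δ x' x / 2) / Z x'))
    (hQgrad : ∀ x' x, Qgrad x' x =
      min (Real.exp (g x' x / 2) / Ztil x) (Real.exp (Δ x' x + g x x' / 2) / Ztil x')) :
    ∀ x, ∀ x' ∈ H x, x' ≠ x →
      Real.exp (-(L : ℝ) * DH ^ 2 / 2) * Q x' x ≤ Qgrad x' x := by
  intro x x' hx' _
  rw [hQ, hQgrad, hZ, hZ, hZtil, hZtil, neg_mul, neg_div, mul_min_of_nonneg _ _ (exp_pos _).le]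
  set c := (L : ℝ) * DH ^ 2 / 2
  have hclose : ∀ a b, ‖b - a‖ ≤ DH → |Δ b a - g b a| ≤ c := by
    intro a b hab
    rw [hΔ, hg]
    calc |f b - f a - inner ℝ (gradient f a) (b - a)| ≤ L / 2 * ‖b - a‖ ^ 2 :=
          abs_sub_sub_inner_gradient_le_of_lipschitzWith_gradient hf hL a b
      _ ≤ L / 2 * DH ^ 2 := by gcongr
      _ = c := by ring
  have hneighbor : ∀ a, ∀ y ∈ H a, g y a / 2 ≤ Δ y a / 2 + c / 2 := fun a y hy => by
    linarith [(abs_le.1 (hclose a y (hDH a y hy))).1]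
  have hforward : Δ x' x - g x' x ≤ c := (abs_le.1 (hclose x x' (hDH x x' hx'))).2
  have hbackward : Δ x x' - g x x' ≤ c := (abs_le.1 (hclose x' x (norm_sub_rev x x' ▸ hDH x x' hx'))).2
  have hanti : Δ x x' = -Δ x' x := by rw [hΔ, hΔ]; ring
  exact min_le_min (exp_neg_mul_exp_div_sum_exp_le (hneighbor x) (by linarith))
    (exp_neg_mul_exp_div_sum_exp_le (hneighbor x') (by linarith))

/-- Peskun-type kernel domination for the Taylor-approximate locally balanced proposal:
with `Δ(x',x) = f x' - f x`, `∇(x',x) = ⟪∇f x, x' - x⟫`,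
`Z(x) = Σ_{y∈H x} exp(Δ(y,x)/2)`, `Z̃(x) = Σ_{y∈H x} exp(∇(y,x)/2)`,
`Q(x',x) = min(exp(Δ(x',x)/2)/Z x, exp(Δ(x',x)/2)/Z x')` and
`Q^∇(x',x) = min(exp(∇(x',x)/2)/Z̃ x, exp(Δ(x',x) + ∇(x,x')/2)/Z̃ x')`,
if `f` is `L`-smooth and `H` is symmetric with neighbor distances bounded by `D_H`, then
`Q^∇(x',x) ≥ exp(-L·D_H²/2)·Q(x',x)` for all `x' ∈ H x` with `x' ≠ x`. -/
theorem kernel_domination {D : ℕ}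
    (f : EuclideanSpace ℝ (Fin D) → ℝ) (L : NNReal)
    (hf : Differentiable ℝ f)
    (hL : LipschitzWith L (gradient f))
    (H : EuclideanSpace ℝ (Fin D) → Finset (EuclideanSpace ℝ (Fin D)))
    (hsym : ∀ x x', x' ∈ H x ↔ x ∈ H x')
    (DH : ℝ) (hDH : ∀ x, ∀ x' ∈ H x, ‖x' - x‖ ≤ DH)
    (Δ : EuclideanSpace ℝ (Fin D) → EuclideanSpace ℝ (Fin D) → ℝ)
    (hΔ : ∀ x' x, Δ x' x = f x' - f x)
    (g : EuclideanSpace ℝ (Fin D) → EuclideanSpace ℝ (Fin D) → ℝ)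
    (hg : ∀ x' x, g x' x = (inner ℝ (gradient f x) (x' - x) : ℝ))
    (Z Ztil : EuclideanSpace ℝ (Fin D) → ℝ)
    (hZ : ∀ x, Z x = ∑ y ∈ H x, Real.exp (Δ y x / 2))
    (hZtil : ∀ x, Ztil x = ∑ y ∈ H x, Real.exp (g y x / 2))
    (Q Qgrad : EuclideanSpace ℝ (Fin D) → EuclideanSpace ℝ (Fin D) → ℝ)
    (hQ : ∀ x' x, Q x' x = min (Real.exp (Δ x' x / 2) / Z x) (Real.exp (Δ x' x / 2) / Z x'))
    (hQgrad : ∀ x' x, Qgrad x' x =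
      min (Real.exp (g x' x / 2) / Ztil x) (Real.exp (Δ x' x + g x x' / 2) / Ztil x')) :
    ∀ x, ∀ x' ∈ H x, x' ≠ x →
      Real.exp (-(L : ℝ) * DH ^ 2 / 2) * Q x' x ≤ Qgrad x' x :=
  kernel_domination_general f L hf hL H DH hDH Δ hΔ g hg Z Ztil hZ hZtil Q Qgrad hQ hQgrad
end

section
/- Let Q₁ and Q₂ be irreducible Markov transition matrices on a finite state space X, both reversible with respect to a probability distribution p, and suppose Q₁(x,x') ≥ c·Q₂(x,x') for all x ≠ x' and some c ∈ (0,1]. Then the spectral gap satisfies Gap(Q₁) ≥ c·Gap(Q₂), where Gap(Q) = 1 - λ₂(Q) and λ₂ is the second largest eigenvalue of Q. -/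
/-!
Conjugating by `√p` turns a `p`-reversible `Q` into the symmetric matrix `S = symmetrize p Q`, and
for `f = √p · g` one has `⟪f, f⟫ - ⟪f, S f⟫ = E_Q(g)`, the Dirichlet form
`½ ∑ p(x) Q(x,y) (g x - g y)²`. The diagonal of `Q` does not enter `E_Q`, so the hypothesis
gives `c · E_{Q₂} ≤ E_{Q₁}`. The vector `√p` is an eigenvector of both `Sᵢ` for the eigenvalue `1`,
which is the top one because `E_Q ≥ 0`; so on its orthogonal complement the Rayleigh quotient of
`S₂` is at most `λ₂(Q₂)`, hence that of `S₁` at most `1 - c (1 - λ₂(Q₂))`. Finally, one half of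
Courant–Fischer: if the Rayleigh quotient is at most `t` on some hyperplane, then the smaller of
any two eigenvalues is at most `t`, since their eigenvectors span a plane meeting the hyperplane.
-/

open Matrix

/-- The symmetrization `S(x,y) = √p(x)·Q(x,y)/√p(y)` of a `p`-reversible transition
matrix; it has the same eigenvalues as `Q`. -/
noncomputable def symmetrize {n : ℕ} (p : Fin n → ℝ) (Q : Matrix (Fin n) (Fin n) ℝ) :
    Matrix (Fin n) (Fin n) ℝ :=
  Matrix.of fun x y => Real.sqrt (p x) * Q x y / Real.sqrt (p y)

/-- The second largest eigenvalue (counted with multiplicity) of a Hermitian matrix: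
sort the eigenvalues in increasing order and take the `(n-2)`-th entry. -/
noncomputable def lambdaTwo {n : ℕ} {S : Matrix (Fin n) (Fin n) ℝ} (hS : S.IsHermitian) : ℝ :=
  ((Finset.univ.val.map hS.eigenvalues).sort (· ≤ ·)).getD (n - 2) 0

open scoped RealInnerProductSpace

theorem sort_univ_val_map_eq_ofFn {α : Type*} [LinearOrder α] {n : ℕ} (f : Fin n → α) :
    (Finset.univ.val.map f).sort (· ≤ ·) = List.ofFn (f ∘ Tuple.sort f) := by
  refine List.Perm.eq_of_pairwise' (Multiset.pairwise_sort _ _)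
    (Tuple.monotone_sort f).sortedLE_ofFn.pairwise ?_
  rw [← Multiset.coe_eq_coe, Multiset.sort_eq, Fin.univ_val_map]
  exact Quotient.sound ((Tuple.sort f).ofFn_comp_perm f).symm

theorem exists_getD_sort_sub_two {α : Type*} [LinearOrder α] {n : ℕ} (hn : 2 ≤ n)
    (f : Fin n → α) (d : α) :
    ∃ i j, i ≠ j ∧ f i ≤ f j ∧ (∀ k ≠ j, f k ≤ f i) ∧
      ((Finset.univ.val.map f).sort (· ≤ ·)).getD (n - 2) d = f i := by
  set σ := Tuple.sort f
  have hmono : Monotone (f ∘ σ) := Tuple.monotone_sort f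
  refine ⟨σ ⟨n - 2, by omega⟩, σ ⟨n - 1, by omega⟩, fun h => ?_, hmono ?_, fun k hk => ?_, ?_⟩
  · have := Fin.mk.inj_iff.mp (σ.injective h)
    omega
  · simp only [Fin.mk_le_mk]; omega
  · rw [← σ.apply_symm_apply k]
    refine hmono (Fin.le_def.mpr ?_)
    have hlt := (σ.symm k).isLt
    have hne : (σ.symm k : ℕ) ≠ n - 1 := fun h => hk <| by
      rw [← σ.apply_symm_apply k]
      exact congrArg σ (Fin.ext h)
    show (σ.symm k : ℕ) ≤ n - 2
    omega
  · rw [sort_univ_val_map_eq_ofFn, List.getD_eq_getElem _ _ (by simp; omega)]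
    simp [σ]

namespace OrthonormalBasis

variable {ι E : Type*} [Fintype ι] [NormedAddCommGroup E] [InnerProductSpace ℝ E]
  {b : OrthonormalBasis ι ℝ E} {T : E →ₗ[ℝ] E} {μ : ι → ℝ}

theorem inner_apply_of_apply_eq_smul (hb : ∀ i, T (b i) = μ i • b i) (i : ι) (x : E) :
    ⟪b i, T x⟫ = μ i * ⟪b i, x⟫ := by
  conv_lhs => rw [← b.sum_repr' x]
  simp only [map_sum, map_smul, hb, smul_smul, b.orthonormal.inner_right_fintype]
  ring

theorem inner_apply_self_eq_sum (hb : ∀ i, T (b i) = μ i • b i) (x : E) :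
    ⟪T x, x⟫ = ∑ i, μ i * ⟪b i, x⟫ ^ 2 := by
  rw [real_inner_comm, ← b.sum_inner_mul_inner]
  refine Finset.sum_congr rfl fun i _ => ?_
  rw [inner_apply_of_apply_eq_smul hb, real_inner_comm]
  ring

theorem inner_apply_self_le (hb : ∀ i, T (b i) = μ i • b i) {x : E} {t : ℝ}
    (h : ∀ i, ⟪b i, x⟫ ≠ 0 → μ i ≤ t) : ⟪T x, x⟫ ≤ t * ‖x‖ ^ 2 := by
  rw [inner_apply_self_eq_sum hb, ← b.sum_sq_inner_right, Finset.mul_sum]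
  refine Finset.sum_le_sum fun i _ => ?_
  by_cases hi : ⟪b i, x⟫ = 0
  · simp [hi]
  · exact mul_le_mul_of_nonneg_right (h i hi) (sq_nonneg _)

theorem le_inner_apply_self (hb : ∀ i, T (b i) = μ i • b i) {x : E} {t : ℝ}
    (h : ∀ i, ⟪b i, x⟫ ≠ 0 → t ≤ μ i) : t * ‖x‖ ^ 2 ≤ ⟪T x, x⟫ := by
  rw [inner_apply_self_eq_sum hb, ← b.sum_sq_inner_right, Finset.mul_sum]
  refine Finset.sum_le_sum fun i _ => ?_
  by_cases hi : ⟪b i, x⟫ = 0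
  · simp [hi]
  · exact mul_le_mul_of_nonneg_right (h i hi) (sq_nonneg _)

theorem inner_eq_zero_of_apply_eq_self (hb : ∀ i, T (b i) = μ i • b i) {v : E} (hv : T v = v)
    {i : ι} (hi : μ i ≠ 1) : ⟪b i, v⟫ = 0 := by
  have h := inner_apply_of_apply_eq_smul hb i v
  rw [hv] at h
  have : (μ i - 1) * ⟪b i, v⟫ = 0 := by linarith
  exact (mul_eq_zero.mp this).resolve_left (sub_ne_zero.mpr hi)

theorem min_le_of_inner_apply_self_le (hb : ∀ i, T (b i) = μ i • b i) {i j : ι} (hij : i ≠ j)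
    (v : E) {t : ℝ} (h : ∀ x, ⟪x, v⟫ = 0 → ⟪T x, x⟫ ≤ t * ‖x‖ ^ 2) : min (μ i) (μ j) ≤ t := by
  have key : ∀ x, x ≠ 0 → ⟪x, v⟫ = 0 → (∀ k, ⟪b k, x⟫ ≠ 0 → k = i ∨ k = j) →
      min (μ i) (μ j) ≤ t := by
    intro x hx0 hxv hx
    refine le_of_mul_le_mul_right ((le_inner_apply_self hb fun k hk => ?_).trans (h x hxv))
      (by positivity)
    rcases hx k hk with rfl | rfl
    exacts [min_le_left _ _, min_le_right _ _]
  have hbb : ∀ {k l}, k ≠ l → ⟪b k, b l⟫ = 0 := fun hkl => b.orthonormal.inner_eq_zero hkl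
  by_cases hi : ⟪b i, v⟫ = 0
  · refine key (b i) (b.orthonormal.ne_zero i) hi fun k hk => ?_
    exact .inl (by_contra fun hki => hk (hbb hki))
  · refine key (⟪b j, v⟫ • b i - ⟪b i, v⟫ • b j) (fun h0 => hi ?_) ?_ fun k hk => ?_
    · simpa [inner_sub_right, inner_smul_right, hbb hij.symm, b.orthonormal.1 j,
        real_inner_self_eq_norm_sq] using congrArg (⟪b j, ·⟫) h0
    · rw [inner_sub_left, inner_smul_left, inner_smul_left]
      simp only [conj_trivial]
      ring
    · by_contra hkij
      rw [not_or] at hkij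
      simp [inner_sub_right, inner_smul_right, hbb hkij.1, hbb hkij.2] at hk

theorem inner_apply_self_le_of_apply_eq_self (hb : ∀ i, T (b i) = μ i • b i)
    (hT : ∀ x, ⟪T x, x⟫ ≤ ‖x‖ ^ 2) {v : E} (hv : T v = v) (hv0 : v ≠ 0) {j : ι} {s : ℝ}
    (hs : ∀ k ≠ j, μ k ≤ s) {x : E} (hx : ⟪x, v⟫ = 0) : ⟪T x, x⟫ ≤ s * ‖x‖ ^ 2 := by
  refine inner_apply_self_le hb fun k hk => ?_
  obtain rfl | hkj := eq_or_ne k j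
  swap
  · exact hs k hkj
  by_contra! hlt
  have hj1 : μ k ≤ 1 := by
    simpa [hb, real_inner_smul_left, real_inner_self_eq_norm_sq, b.orthonormal.1 k] using hT (b k)
  have hvk : ∀ l ≠ k, ⟪b l, v⟫ = 0 := fun l hl =>
    inner_eq_zero_of_apply_eq_self hb hv ((hs l hl).trans_lt (hlt.trans_le hj1)).ne
  have hvk0 : ⟪b k, v⟫ ≠ 0 := fun h0 => hv0 <| by
    rw [← b.sum_repr' v]
    exact Finset.sum_eq_zero fun l _ => by
      obtain rfl | hl := eq_or_ne l k
      · rw [h0, zero_smul]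
      · rw [hvk l hl, zero_smul]
  rw [← b.sum_inner_mul_inner, Finset.sum_eq_single k (fun l _ hl => by rw [hvk l hl, mul_zero])
    (by simp), real_inner_comm] at hx
  exact hk ((mul_eq_zero.mp hx).resolve_right hvk0)

end OrthonormalBasis

theorem EuclideanSpace.real_inner_eq_dotProduct {ι : Type*} [Fintype ι] (x y : EuclideanSpace ℝ ι) :
    ⟪x, y⟫ = WithLp.ofLp x ⬝ᵥ WithLp.ofLp y := by
  simp [EuclideanSpace.inner_eq_star_dotProduct, dotProduct_comm]

theorem Matrix.IsHermitian.toEuclideanLin_eigenvectorBasis {ι : Type*} [Fintype ι] [DecidableEq ι]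
    {S : Matrix ι ι ℝ} (hS : S.IsHermitian) (i : ι) :
    S.toEuclideanLin (hS.eigenvectorBasis i) = hS.eigenvalues i • hS.eigenvectorBasis i := by
  rw [Matrix.toLpLin_apply, hS.mulVec_eigenvectorBasis]
  rfl

theorem Matrix.real_inner_toEuclideanLin_self {ι : Type*} [Fintype ι] [DecidableEq ι]
    (S : Matrix ι ι ℝ) (x : EuclideanSpace ℝ ι) :
    ⟪S.toEuclideanLin x, x⟫ = WithLp.ofLp x ⬝ᵥ (S *ᵥ WithLp.ofLp x) := by
  rw [EuclideanSpace.real_inner_eq_dotProduct, dotProduct_comm]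
  rfl

theorem EuclideanSpace.norm_sq_eq_dotProduct {ι : Type*} [Fintype ι] (x : EuclideanSpace ℝ ι) :
    ‖x‖ ^ 2 = WithLp.ofLp x ⬝ᵥ WithLp.ofLp x := by
  rw [← real_inner_self_eq_norm_sq, EuclideanSpace.real_inner_eq_dotProduct]

section
variable {n : ℕ} {S : Matrix (Fin n) (Fin n) ℝ}

theorem lambdaTwo_le_of_dotProduct_mulVec_le (hn : 2 ≤ n) (hS : S.IsHermitian) (v : Fin n → ℝ)
    {t : ℝ} (h : ∀ f, f ⬝ᵥ v = 0 → f ⬝ᵥ (S *ᵥ f) ≤ t * (f ⬝ᵥ f)) : lambdaTwo hS ≤ t := by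
  obtain ⟨i, j, hij, hle, -, hsnd⟩ := exists_getD_sort_sub_two hn hS.eigenvalues 0
  rw [lambdaTwo, hsnd, ← min_eq_left hle]
  refine OrthonormalBasis.min_le_of_inner_apply_self_le hS.toEuclideanLin_eigenvectorBasis hij
    (WithLp.toLp 2 v) fun x hx => ?_
  rw [S.real_inner_toEuclideanLin_self, EuclideanSpace.norm_sq_eq_dotProduct]
  exact h _ (by rwa [EuclideanSpace.real_inner_eq_dotProduct] at hx)

theorem dotProduct_mulVec_le_lambdaTwo (hn : 2 ≤ n) (hS : S.IsHermitian)
    (hle_one : ∀ f, f ⬝ᵥ (S *ᵥ f) ≤ f ⬝ᵥ f) {v : Fin n → ℝ} (hv : S *ᵥ v = v) (hv0 : v ≠ 0)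
    {f : Fin n → ℝ} (hf : f ⬝ᵥ v = 0) : f ⬝ᵥ (S *ᵥ f) ≤ lambdaTwo hS * (f ⬝ᵥ f) := by
  obtain ⟨i, j, -, -, hj, hsnd⟩ := exists_getD_sort_sub_two hn hS.eigenvalues 0
  rw [lambdaTwo, hsnd]
  have hrayleigh := OrthonormalBasis.inner_apply_self_le_of_apply_eq_self
    hS.toEuclideanLin_eigenvectorBasis (fun x => ?_) (v := WithLp.toLp 2 v)
    (congrArg (WithLp.toLp 2) hv) (by simpa using hv0) hj (x := WithLp.toLp 2 f)
    (by rwa [EuclideanSpace.real_inner_eq_dotProduct])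
  · rwa [S.real_inner_toEuclideanLin_self, EuclideanSpace.norm_sq_eq_dotProduct] at hrayleigh
  · rw [S.real_inner_toEuclideanLin_self, EuclideanSpace.norm_sq_eq_dotProduct]
    exact hle_one _

end

section
variable {ι : Type*} [Fintype ι]

noncomputable def dirichletForm (p : ι → ℝ) (Q : Matrix ι ι ℝ) (g : ι → ℝ) : ℝ :=
  2⁻¹ * ∑ x, ∑ y, p x * Q x y * (g x - g y) ^ 2

theorem dirichletForm_nonneg {p : ι → ℝ} (hp : ∀ x, 0 ≤ p x) {Q : Matrix ι ι ℝ}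
    (hQ : ∀ x y, 0 ≤ Q x y) (g : ι → ℝ) : 0 ≤ dirichletForm p Q g :=
  mul_nonneg (by norm_num) <| Finset.sum_nonneg fun x _ => Finset.sum_nonneg fun y _ =>
    mul_nonneg (mul_nonneg (hp x) (hQ x y)) (sq_nonneg _)

theorem mul_dirichletForm_le_dirichletForm {p : ι → ℝ} (hp : ∀ x, 0 ≤ p x)
    {Q₁ Q₂ : Matrix ι ι ℝ} {c : ℝ} (hdom : ∀ x y, x ≠ y → c * Q₂ x y ≤ Q₁ x y) (g : ι → ℝ) :
    c * dirichletForm p Q₂ g ≤ dirichletForm p Q₁ g := by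
  rw [dirichletForm, dirichletForm, mul_left_comm, Finset.mul_sum]
  refine mul_le_mul_of_nonneg_left (Finset.sum_le_sum fun x _ => ?_) (by norm_num)
  rw [Finset.mul_sum]
  refine Finset.sum_le_sum fun y _ => ?_
  obtain rfl | hxy := eq_or_ne x y
  · simp
  · calc c * (p x * Q₂ x y * (g x - g y) ^ 2) = p x * (c * Q₂ x y) * (g x - g y) ^ 2 := by ring
      _ ≤ p x * Q₁ x y * (g x - g y) ^ 2 := by
        gcongr
        exacts [hp x, hdom x y hxy]

theorem dirichletForm_eq_sub {p : ι → ℝ} {Q : Matrix ι ι ℝ} (hrow : ∀ x, ∑ y, Q x y = 1)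
    (hrev : ∀ x y, p x * Q x y = p y * Q y x) (g : ι → ℝ) :
    dirichletForm p Q g = ∑ x, p x * g x ^ 2 - ∑ x, ∑ y, p x * Q x y * (g x * g y) := by
  have hleft : ∑ x, ∑ y, p x * Q x y * g x ^ 2 = ∑ x, p x * g x ^ 2 :=
    Finset.sum_congr rfl fun x _ => by
      rw [← Finset.sum_mul, ← Finset.mul_sum, hrow, mul_one]
  have hright : ∑ x, ∑ y, p x * Q x y * g y ^ 2 = ∑ x, p x * g x ^ 2 := by
    rw [Finset.sum_comm, ← hleft]
    exact Finset.sum_congr rfl fun y _ => Finset.sum_congr rfl fun x _ => by rw [hrev]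
  have hexpand : ∀ x y, p x * Q x y * (g x - g y) ^ 2
      = p x * Q x y * g x ^ 2 + p x * Q x y * g y ^ 2 - 2 * (p x * Q x y * (g x * g y)) :=
    fun x y => by ring
  simp_rw [dirichletForm, hexpand, Finset.sum_sub_distrib, Finset.sum_add_distrib,
    ← Finset.mul_sum, hleft, hright]
  ring

end

section
variable {n : ℕ} {p : Fin n → ℝ} {Q : Matrix (Fin n) (Fin n) ℝ}

theorem symmetrize_mulVec_sqrt (hp : ∀ x, 0 < p x) (hrow : ∀ x, ∑ y, Q x y = 1) :
    symmetrize p Q *ᵥ (fun x => √(p x)) = fun x => √(p x) := by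
  funext x
  simp only [mulVec, dotProduct, symmetrize, of_apply]
  simp_rw [div_mul_cancel₀ _ (Real.sqrt_pos.mpr (hp _)).ne', ← Finset.mul_sum, hrow, mul_one]

theorem dotProduct_sub_dotProduct_symmetrize_mulVec (hp : ∀ x, 0 < p x)
    (hrow : ∀ x, ∑ y, Q x y = 1) (hrev : ∀ x y, p x * Q x y = p y * Q y x) (f : Fin n → ℝ) :
    f ⬝ᵥ f - f ⬝ᵥ (symmetrize p Q *ᵥ f) = dirichletForm p Q (fun x => f x / √(p x)) := by
  set g := fun x => f x / √(p x)
  have hsqrt : ∀ x, √(p x) ≠ 0 := fun x => (Real.sqrt_pos.mpr (hp x)).ne'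
  have hfg : ∀ x, f x = √(p x) * g x := fun x => (mul_div_cancel₀ _ (hsqrt x)).symm
  have hp_sq : ∀ x, √(p x) * √(p x) = p x := fun x => Real.mul_self_sqrt (hp x).le
  have hnorm : f ⬝ᵥ f = ∑ x, p x * g x ^ 2 :=
    Finset.sum_congr rfl fun x _ => by rw [hfg]; linear_combination g x ^ 2 * hp_sq x
  have hform : f ⬝ᵥ (symmetrize p Q *ᵥ f) = ∑ x, ∑ y, p x * Q x y * (g x * g y) := by
    refine Finset.sum_congr rfl fun x _ => ?_
    rw [mulVec, dotProduct, Finset.mul_sum]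
    refine Finset.sum_congr rfl fun y _ => ?_
    have hcancel : √(p x) * Q x y / √(p y) * (√(p y) * g y) = √(p x) * Q x y * g y := by
      field_simp [hsqrt y]
    rw [symmetrize, of_apply, hfg x, hfg y, hcancel]
    linear_combination Q x y * g x * g y * hp_sq x
  rw [dirichletForm_eq_sub hrow hrev, hnorm, hform]

end

theorem spectral_gap_comparison_general {n : ℕ} (hn : 2 ≤ n)
    (p : Fin n → ℝ) (hp : ∀ x, 0 < p x)
    (Q₁ Q₂ : Matrix (Fin n) (Fin n) ℝ)
    (h1row : ∀ x, ∑ y, Q₁ x y = 1)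
    (h2nonneg : ∀ x y, 0 ≤ Q₂ x y) (h2row : ∀ x, ∑ y, Q₂ x y = 1)
    (h1rev : ∀ x y, p x * Q₁ x y = p y * Q₁ y x)
    (h2rev : ∀ x y, p x * Q₂ x y = p y * Q₂ y x)
    (c : ℝ) (hc0 : 0 < c)
    (hdom : ∀ x y, x ≠ y → c * Q₂ x y ≤ Q₁ x y)
    (hH1 : (symmetrize p Q₁).IsHermitian) (hH2 : (symmetrize p Q₂).IsHermitian) :
    c * (1 - lambdaTwo hH2) ≤ 1 - lambdaTwo hH1 := by
  set v : Fin n → ℝ := fun x => √(p x)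
  have hv0 : v ≠ 0 := fun h => (Real.sqrt_pos.mpr (hp ⟨0, by omega⟩)).ne' (congrFun h _)
  have hgap₁ := dotProduct_sub_dotProduct_symmetrize_mulVec hp h1row h1rev
  have hgap₂ := dotProduct_sub_dotProduct_symmetrize_mulVec hp h2row h2rev
  have hS₂_le_one : ∀ f, f ⬝ᵥ (symmetrize p Q₂ *ᵥ f) ≤ f ⬝ᵥ f := fun f => by
    linarith [hgap₂ f, dirichletForm_nonneg (fun x => (hp x).le) h2nonneg (fun x => f x / √(p x))]
  suffices lambdaTwo hH1 ≤ 1 - c * (1 - lambdaTwo hH2) by linarith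
  refine lambdaTwo_le_of_dotProduct_mulVec_le hn hH1 v fun f hf => ?_
  have hS₂ := dotProduct_mulVec_le_lambdaTwo hn hH2 hS₂_le_one
    (symmetrize_mulVec_sqrt hp h2row) hv0 hf
  have hcomp := mul_dirichletForm_le_dirichletForm (fun x => (hp x).le) hdom (fun x => f x / √(p x))
  rw [← hgap₁, ← hgap₂] at hcomp
  have := mul_le_mul_of_nonneg_left hS₂ hc0.le
  linarith

/-- Peskun-type spectral gap comparison (Theorem 2 of Zanella 2020): if `Q₁, Q₂` are
irreducible `p`-reversible Markov transition matrices on a finite state space with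
`Q₁(x,x') ≥ c·Q₂(x,x')` for all `x ≠ x'` and `c ∈ (0,1]`, then
`Gap(Q₁) ≥ c·Gap(Q₂)` where `Gap(Q) = 1 - λ₂(Q)`. -/
theorem spectral_gap_comparison {n : ℕ} (hn : 2 ≤ n)
    (p : Fin n → ℝ) (hp : ∀ x, 0 < p x) (hpsum : ∑ x, p x = 1)
    (Q₁ Q₂ : Matrix (Fin n) (Fin n) ℝ)
    (h1nonneg : ∀ x y, 0 ≤ Q₁ x y) (h1row : ∀ x, ∑ y, Q₁ x y = 1)
    (h2nonneg : ∀ x y, 0 ≤ Q₂ x y) (h2row : ∀ x, ∑ y, Q₂ x y = 1)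
    (h1irred : ∀ x y, ∃ k : ℕ, 0 < (Q₁ ^ k) x y)
    (h2irred : ∀ x y, ∃ k : ℕ, 0 < (Q₂ ^ k) x y)
    (h1rev : ∀ x y, p x * Q₁ x y = p y * Q₁ y x)
    (h2rev : ∀ x y, p x * Q₂ x y = p y * Q₂ y x)
    (c : ℝ) (hc0 : 0 < c) (hc1 : c ≤ 1)
    (hdom : ∀ x y, x ≠ y → c * Q₂ x y ≤ Q₁ x y)
    (hH1 : (symmetrize p Q₁).IsHermitian) (hH2 : (symmetrize p Q₂).IsHermitian) :
    c * (1 - lambdaTwo hH2) ≤ 1 - lambdaTwo hH1 :=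
  spectral_gap_comparison_general hn p hp Q₁ Q₂ h1row h2nonneg h2row h1rev h2rev c hc0 hdom hH1 hH2
end
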